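/- arXiv:1303.1676 — 2 statements merged into one kernel-verified Lean document; each statement's English description precedes it below -/
import Mathlib

section
/- Let p > 15 be a prime, let G = ⟨g⟩ be a cyclic group of order p, and let S = g·g·(5g)·((p−4)g)·((p−3)g) be a minimal zero-sum sequence over G (this is the case a = 3, b = 4, c = 5 of the form S = g·g·(cg)·((p−b)g)·((p−a)g) with 2 + c = a + b and 2 < a ≤ b < c < p/2). Then ind(S) = 1. -/
open Classical in
/-- The canonical coefficient of `x` with respect to `g`: the least positive `k` with
`k • g = x` (or `0` if no such `k` exists). If `g` generates a group of order `n`,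
this is the unique `k ∈ [1, n]` with `k • g = x`. -/
noncomputable def coeff {G : Type*} [AddCommGroup G] (g x : G) : ℕ :=
  if h : ∃ k : ℕ, 0 < k ∧ k • g = x then Nat.find h else 0

/-- `‖S‖_g = (n₁ + ⋯ + n_l) / n` where `S = (n₁ g) ⋯ (n_l g)`, `n_i ∈ [1, n]`. -/
noncomputable def seqNorm {G : Type*} [AddCommGroup G] [Fintype G] (g : G) (S : Multiset G) : ℝ :=
  ((S.map (coeff g)).sum : ℝ) / (Fintype.card G : ℝ)

/-- The index of a sequence `S`: the minimum of `‖S‖_g` over all generators `g` of `G`. -/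
noncomputable def seqIndex {G : Type*} [AddCommGroup G] [Fintype G] (S : Multiset G) : ℝ :=
  sInf ((fun g => seqNorm g S) '' {g : G | AddSubgroup.zmultiples g = ⊤})

/-- A minimal zero-sum sequence: a nonempty zero-sum sequence none of whose proper
nonempty subsequences has sum zero. -/
def IsMinZeroSum {G : Type*} [AddCommGroup G] (S : Multiset G) : Prop :=
  S ≠ 0 ∧ S.sum = 0 ∧ ∀ T : Multiset G, T ≤ S → T ≠ 0 → T ≠ S → T.sum ≠ 0

open Classical in
lemma coeff_spec {G : Type*} [AddCommGroup G] {g x : G}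
    (h : ∃ k : ℕ, 0 < k ∧ k • g = x) : 0 < coeff g x ∧ coeff g x • g = x := by
  rw [coeff, dif_pos h]; exact Nat.find_spec h

open Classical in
lemma coeff_eq_of {G : Type*} [AddCommGroup G] {g x : G} {n k : ℕ}
    (hord : addOrderOf g = n) (hk1 : 0 < k) (hk2 : k ≤ n) (hkx : k • g = x) :
    coeff g x = k := by
  have hn : 0 < n := lt_of_lt_of_le hk1 hk2
  have hex : ∃ m : ℕ, 0 < m ∧ m • g = x := ⟨k, hk1, hkx⟩
  rw [coeff, dif_pos hex]
  obtain ⟨hm1, hm2⟩ := Nat.find_spec hex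
  have hle : Nat.find hex ≤ k := Nat.find_le ⟨hk1, hkx⟩
  set m := Nat.find hex with hm
  have h0 : (k - m) • g = 0 := by
    have h1 : (m + (k - m)) • g = x := by rw [Nat.add_sub_cancel' hle]; exact hkx
    rw [add_smul, hm2] at h1
    exact add_eq_left.mp h1
  have hd : n ∣ k - m := hord ▸ addOrderOf_dvd_of_nsmul_eq_zero h0
  have : k - m = 0 := Nat.eq_zero_of_dvd_of_lt hd (by omega) |>.symm ▸ rfl
  omega

lemma gen_exists_pos {G : Type*} [AddCommGroup G] {h x : G} {n : ℕ}
    (htop : AddSubgroup.zmultiples h = ⊤) (hn : addOrderOf h = n) (hn0 : 0 < n) :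
    ∃ k : ℕ, 0 < k ∧ k • h = x := by
  have hx : x ∈ AddSubgroup.zmultiples h := htop ▸ AddSubgroup.mem_top x
  obtain ⟨z, hz⟩ := AddSubgroup.mem_zmultiples_iff.mp hx
  have hnz : (0:ℤ) < (n:ℤ) := by exact_mod_cast hn0
  set k : ℕ := (z % (n:ℤ)).toNat with hk
  have hkz : (k : ℤ) = z % (n:ℤ) := Int.toNat_of_nonneg (Int.emod_nonneg z hnz.ne')
  have hsm : ((k + n : ℕ) : ℤ) • h = x := by
    push_cast
    rw [hkz]
    have : z % (n:ℤ) + (n:ℤ) = z - (n:ℤ) * (z / n) + n := by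
      rw [Int.emod_def]
    have hnh : (n:ℤ) • h = 0 := by
      rw [natCast_zsmul, ← hn]; exact addOrderOf_nsmul_eq_zero h
    rw [this, add_zsmul, sub_zsmul, mul_comm (n:ℤ) (z/n), mul_zsmul, hnh, smul_zero, hz]
    abel
  refine ⟨k + n, by omega, ?_⟩
  rw [← natCast_zsmul, hsm]

/-- for a prime `p > 15`, the minimal zero-sum sequence
`S = g·g·(5g)·((p-4)g)·((p-3)g)` (case `a = 3, b = 4, c = 5`) has `ind(S) = 1`. -/
theorem stmt6 (p : ℕ) (hp : p.Prime) (h15 : 15 < p)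
    (G : Type*) [AddCommGroup G] [Fintype G] (hcard : Fintype.card G = p)
    (g : G) (hg : AddSubgroup.zmultiples g = ⊤)
    (S : Multiset G) (hS : S = {g, g, (5 : ℕ) • g, (p - 4) • g, (p - 3) • g})
    (hmin : IsMinZeroSum S) :
    seqIndex S = 1 := by
  have hp2 : 2 ≤ p := hp.two_le
  have hnontriv : Nontrivial G := Fintype.one_lt_card_iff_nontrivial.mp (by omega)
  -- any generator has addOrderOf = p
  have hgenOrd : ∀ h : G, AddSubgroup.zmultiples h = ⊤ → addOrderOf h = p := by
    intro h htop
    have h1 : addOrderOf h ∣ p := hcard ▸ addOrderOf_dvd_card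
    rcases (Nat.Prime.eq_one_or_self_of_dvd hp _ h1) with h2 | h2
    · exfalso
      have : h = 0 := AddMonoid.addOrderOf_eq_one_iff.mp h2
      rw [this, AddSubgroup.zmultiples_zero_eq_bot] at htop
      exact bot_ne_top htop
    · exact h2
  -- any nonzero element is a generator
  have hnzGen : ∀ h : G, h ≠ 0 → AddSubgroup.zmultiples h = ⊤ := by
    intro h hne
    have h1 : addOrderOf h ∣ p := hcard ▸ addOrderOf_dvd_card
    rcases (Nat.Prime.eq_one_or_self_of_dvd hp _ h1) with h2 | h2
    · exact absurd (AddMonoid.addOrderOf_eq_one_iff.mp h2) hne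
    · apply AddSubgroup.eq_top_of_card_eq
      rw [Nat.card_zmultiples, h2, Nat.card_eq_fintype_card, hcard]
  have hgOrd : addOrderOf g = p := hgenOrd g hg
  have hpg : p • g = 0 := by rw [← hgOrd]; exact addOrderOf_nsmul_eq_zero g
  -- the elements of S are nonzero
  have hsmul_ne : ∀ m : ℕ, 0 < m → m < p → m • g ≠ 0 := by
    intro m hm1 hm2 h0
    have := hgOrd ▸ addOrderOf_dvd_of_nsmul_eq_zero h0
    exact absurd (Nat.le_of_dvd hm1 this) (by omega)
  haveI : Fact p.Prime := ⟨hp⟩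
  -- arithmetic setup
  set u : ℕ := p / 4 with hu
  set r : ℕ := p % 4 with hr
  have hodd : p % 2 = 1 := Nat.odd_iff.mp (hp.odd_of_ne_two (by omega))
  have hru : p = 4 * u + r := by omega
  have hr13 : r = 1 ∨ r = 3 := by omega
  have hu4 : 4 ≤ u := by omega
  -- the inverse of u mod p
  have hune : (u : ZMod p) ≠ 0 := by
    rw [Ne, ZMod.natCast_eq_zero_iff]
    intro hd
    exact absurd (Nat.le_of_dvd (by omega) hd) (by omega)
  set w : ℕ := ((u : ZMod p)⁻¹).val with hw
  have hwcast : ((w : ℕ) : ZMod p) = (u : ZMod p)⁻¹ := ZMod.natCast_rightInverse _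
  have huw : ((u * w : ℕ) : ZMod p) = 1 := by
    push_cast
    rw [hwcast, mul_inv_cancel₀ hune]
  -- the good generator
  set h' : G := w • g with hh'
  have hne : h' ≠ 0 := by
    intro h0
    have hd : p ∣ w := hgOrd ▸ addOrderOf_dvd_of_nsmul_eq_zero h0
    have hz : ((w : ℕ) : ZMod p) = 0 := (ZMod.natCast_eq_zero_iff _ _).mpr hd
    have h3 : (u : ZMod p) * (w : ZMod p) = 1 := by push_cast at huw; exact huw
    rw [hz, mul_zero] at h3
    exact zero_ne_one h3
  have hgen' : AddSubgroup.zmultiples h' = ⊤ := hnzGen h' hne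
  have hOrd' : addOrderOf h' = p := hgenOrd h' hgen'
  have hph' : p • h' = 0 := by rw [← hOrd']; exact addOrderOf_nsmul_eq_zero h'
  have huh : u • h' = g := by
    rw [hh', ← mul_smul]
    have h1 : (u * w) • g = ((u * w) % p) • g := nsmul_eq_mod_nsmul _ hpg
    have h2 : (u * w) % p = 1 := by
      have := (ZMod.natCast_eq_natCast_iff (u * w) 1 p).mp (by rw [huw]; push_cast; ring)
      unfold Nat.ModEq at this
      rwa [Nat.mod_eq_of_lt (show 1 < p by omega)] at this
    rw [h1, h2, one_smul]
  have hpz : (p : ℤ) = 4 * (u : ℤ) + (r : ℤ) := by exact_mod_cast hru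
  -- coefficient computations
  have c1 : coeff h' g = u := coeff_eq_of hOrd' (by omega) (by omega) huh
  have c2 : coeff h' ((5:ℕ) • g) = 5 * u - p := by
    apply coeff_eq_of hOrd' (by omega) (by omega)
    have h1 : ((5 * u - p) + p) • h' = (5 * u) • h' := by
      rw [show (5 * u - p) + p = 5 * u from by omega]
    rw [add_smul, hph', add_zero] at h1
    rw [h1, mul_smul, huh]
  have c4 : coeff h' ((p - 4) • g) = r := by
    apply coeff_eq_of hOrd' (by omega) (by omega)
    have h1 : (p - 4) * u = r + p * (u - 1) := by
      zify [show 4 ≤ p from by omega, show 1 ≤ u from by omega]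
      linear_combination hpz
    have h2 : ((p - 4) * u) • h' = (p - 4) • g := by rw [mul_smul, huh]
    have h3 : ((p - 4) * u) • h' = r • h' := by
      rw [h1, add_smul, mul_comm p (u - 1), mul_smul, hph', smul_zero, add_zero]
    rw [← h3, h2]
  have c5 : coeff h' ((p - 3) • g) = u + r := by
    apply coeff_eq_of hOrd' (by omega) (by omega)
    have h1 : (p - 3) * u = (u + r) + p * (u - 1) := by
      zify [show 3 ≤ p from by omega, show 1 ≤ u from by omega]
      linear_combination hpz
    have h2 : ((p - 3) * u) • h' = (p - 3) • g := by rw [mul_smul, huh]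
    have h3 : ((p - 3) * u) • h' = (u + r) • h' := by
      rw [h1, add_smul, mul_comm p (u - 1), mul_smul, hph', smul_zero, add_zero]
    rw [← h3, h2]
  -- the norm at h' is 1
  have hnorm : seqNorm h' S = 1 := by
    rw [seqNorm, hS, hcard]
    simp only [Multiset.insert_eq_cons, Multiset.map_cons, Multiset.map_singleton,
      Multiset.sum_cons, Multiset.sum_singleton, c1, c2, c4, c5]
    rw [show u + (u + (5 * u - p + (r + (u + r)))) = p from by omega]
    exact div_self (by positivity)
  -- lower bound: every generator gives norm ≥ 1
  have hlb : ∀ y ∈ (fun h => seqNorm h S) '' {h : G | AddSubgroup.zmultiples h = ⊤}, (1:ℝ) ≤ y := by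
    rintro y ⟨h, hh, rfl⟩
    have hOrd := hgenOrd h hh
    have hex : ∀ x : G, ∃ k : ℕ, 0 < k ∧ k • h = x := fun x =>
      gen_exists_pos hh hOrd (by omega)
    obtain ⟨d1p, d1⟩ := coeff_spec (hex g)
    obtain ⟨d2p, d2⟩ := coeff_spec (hex ((5:ℕ) • g))
    obtain ⟨d3p, d3⟩ := coeff_spec (hex ((p - 4) • g))
    obtain ⟨d4p, d4⟩ := coeff_spec (hex ((p - 3) • g))
    set t : ℕ := coeff h g + (coeff h g + (coeff h ((5:ℕ) • g) +
      (coeff h ((p - 4) • g) + coeff h ((p - 3) • g)))) with ht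
    have hsumS : g + (g + ((5:ℕ) • g + ((p - 4) • g + (p - 3) • g))) = 0 := by
      have := hmin.2.1
      rw [hS] at this
      simpa using this
    have hts : t • h = 0 := by
      rw [ht, add_smul, add_smul, add_smul, add_smul, d1, d2, d3, d4]
      rw [← hsumS]
    have hdvd : p ∣ t := hOrd ▸ addOrderOf_dvd_of_nsmul_eq_zero hts
    have hpt : p ≤ t := Nat.le_of_dvd (by omega) hdvd
    show (1:ℝ) ≤ seqNorm h S
    rw [seqNorm, hS, hcard]
    simp only [Multiset.insert_eq_cons, Multiset.map_cons, Multiset.map_singleton,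
      Multiset.sum_cons, Multiset.sum_singleton]
    rw [le_div_iff₀ (by positivity), one_mul]
    exact_mod_cast hpt
  have hmem : (1:ℝ) ∈ (fun h => seqNorm h S) '' {h : G | AddSubgroup.zmultiples h = ⊤} :=
    ⟨h', hgen', hnorm⟩
  rw [seqIndex]
  exact le_antisymm (csInf_le ⟨1, hlb⟩ hmem) (le_csInf ⟨1, hmem⟩ hlb)
end

section
/- Let p be a prime, let G = ⟨g⟩ be a cyclic group of order p, and let S = g·g·(cg)·((p−b)g)·((p−a)g) be a minimal zero-sum sequence over G with 2 + c = a + b and 2 < a ≤ b < c < p/2. Suppose there exist integers k and m with 1 ≤ k ≤ b, kp/c ≤ m < kp/b, gcd(m, p) = 1, and ma < p. Then ‖mS‖_g ≤ 1 (i.e., m + m + (mc − kp) + (kp − mb) + (p − ma) ≤ p), and consequently ind(S) = 1. -/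
section Aux
variable {G : Type*} [AddCommGroup G]

open Classical in
lemma coeff_eq {p : ℕ} {g : G} (hord : addOrderOf g = p) {t : ℕ} (ht1 : 0 < t) (htp : t < p)
    {x : G} (hx : t • g = x) : coeff g x = t := by
  have hex : ∃ k : ℕ, 0 < k ∧ k • g = x := ⟨t, ht1, hx⟩
  unfold coeff
  rw [dif_pos hex]
  have hle : Nat.find hex ≤ t := Nat.find_le ⟨ht1, hx⟩
  obtain ⟨hk0, hkx⟩ := Nat.find_spec hex
  have h0 : (t - Nat.find hex) • g = 0 := by
    rw [sub_nsmul g hle, hx, hkx]; simp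
  have hdvd : p ∣ t - Nat.find hex := hord ▸ addOrderOf_dvd_of_nsmul_eq_zero h0
  have := Nat.eq_zero_of_dvd_of_lt hdvd
  omega

lemma order_of_gen [Fintype G] {h : G} (hgen : AddSubgroup.zmultiples h = ⊤) :
    addOrderOf h = Fintype.card G := by
  rw [← Nat.card_zmultiples h, hgen, AddSubgroup.card_top, Nat.card_eq_fintype_card]

open Classical in
lemma coeff_spec_s14 [Fintype G] {h : G} (hgen : AddSubgroup.zmultiples h = ⊤) (x : G) :
    0 < coeff h x ∧ (coeff h x) • h = x := by
  set p := Fintype.card G with hpdef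
  have hp0 : 0 < p := Fintype.card_pos
  have hord : addOrderOf h = p := order_of_gen hgen
  have hph : p • h = 0 := by rw [← hord]; exact addOrderOf_nsmul_eq_zero h
  have hmem : x ∈ AddSubgroup.zmultiples h := by rw [hgen]; trivial
  obtain ⟨z, hz⟩ := AddSubgroup.mem_zmultiples_iff.mp hmem
  have hphz : (p : ℤ) • h = 0 := by rw [natCast_zsmul]; exact hph
  have hz0 : 0 ≤ z % p := Int.emod_nonneg z (by exact_mod_cast hp0.ne')
  have hex : ∃ k : ℕ, 0 < k ∧ k • h = x := by
    refine ⟨(z % p).toNat + p, by omega, ?_⟩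
    have hcast : (((z % p).toNat + p : ℕ) : ℤ) = z % p + p := by
      push_cast [Int.toNat_of_nonneg hz0]; ring
    have hred : (((z % p).toNat + p : ℕ) : ℤ) • h = z • h := by
      rw [hcast]
      have hd : z % p + p = z + (1 - z / p) * (p : ℤ) := by
        rw [Int.emod_def]; ring
      rw [hd, add_zsmul, mul_zsmul, hphz, smul_zero, add_zero]
    rw [← natCast_zsmul, hred, hz]
  unfold coeff
  rw [dif_pos hex]
  exact Nat.find_spec hex

lemma sum_coeff_smul (h : G) (S : Multiset G) (hall : ∀ x ∈ S, (coeff h x) • h = x) :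
    ((S.map (coeff h)).sum) • h = S.sum := by
  induction S using Multiset.induction_on with
  | empty => simp
  | cons a s ih =>
      rw [Multiset.map_cons, Multiset.sum_cons, Multiset.sum_cons, add_nsmul,
        hall a (Multiset.mem_cons_self a s), ih (fun x hx => hall x (Multiset.mem_cons_of_mem hx))]

lemma norm_ge_one [Fintype G] (S : Multiset G) (hS0 : S ≠ 0) (hsum : S.sum = 0)
    {h : G} (hgen : AddSubgroup.zmultiples h = ⊤) : (1 : ℝ) ≤ seqNorm h S := by
  set p := Fintype.card G with hpdef
  have hp0 : 0 < p := Fintype.card_pos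
  have hord : addOrderOf h = p := order_of_gen hgen
  have hall : ∀ x ∈ S, (coeff h x) • h = x := fun x _ => (coeff_spec_s14 hgen x).2
  have hzero : ((S.map (coeff h)).sum) • h = 0 := by rw [sum_coeff_smul h S hall, hsum]
  have hdvd : p ∣ (S.map (coeff h)).sum := hord ▸ addOrderOf_dvd_of_nsmul_eq_zero hzero
  obtain ⟨x, hx⟩ := Multiset.exists_mem_of_ne_zero hS0
  have hxc : 0 < coeff h x := (coeff_spec_s14 hgen x).1
  have hle : coeff h x ≤ (S.map (coeff h)).sum :=
    Multiset.single_le_sum (fun y _ => Nat.zero_le y) _ (Multiset.mem_map_of_mem _ hx)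
  have hps : p ≤ (S.map (coeff h)).sum := Nat.le_of_dvd (by omega) hdvd
  rw [seqNorm, ← hpdef, le_div_iff₀ (by exact_mod_cast hp0), one_mul]
  exact_mod_cast hps

lemma reduce_smul {p : ℕ} {x : G} (hx : p • x = 0) (t n s : ℕ) (ht : t = n + s * p) :
    t • x = n • x := by
  rw [ht, add_nsmul, ← smul_smul s p x, hx, smul_zero, add_zero]

end Aux

/-- if there exist `k, m` with `1 ≤ k ≤ b`, `kp/c ≤ m < kp/b`, `gcd(m, p) = 1`
and `ma < p`, then `‖mS‖_g ≤ 1` and consequently `ind(S) = 1`. -/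
theorem stmt14 (p : ℕ) (hp : p.Prime)
    (G : Type*) [AddCommGroup G] [Fintype G] (hcard : Fintype.card G = p)
    (g : G) (hg : AddSubgroup.zmultiples g = ⊤)
    (a b c : ℕ) (habc : 2 + c = a + b) (ha2 : 2 < a) (hab : a ≤ b) (hbc : b < c)
    (hcp : (c : ℝ) < (p : ℝ) / 2)
    (S : Multiset G) (hS : S = {g, g, c • g, (p - b) • g, (p - a) • g})
    (hmin : IsMinZeroSum S)
    (k m : ℕ) (hk1 : 1 ≤ k) (hkb : k ≤ b)
    (hm1 : (k : ℝ) * p / c ≤ m) (hm2 : (m : ℝ) < (k : ℝ) * p / b)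
    (hgcd : Nat.gcd m p = 1) (hma : m * a < p) :
    seqNorm g (S.map fun x => m • x) ≤ 1 ∧ seqIndex S = 1 := by
  have hp0 : 0 < p := hp.pos
  have hb0 : 0 < b := by omega
  have hc0 : 0 < c := by omega
  have horder : addOrderOf g = p := hcard ▸ order_of_gen hg
  have hpg : p • g = 0 := by rw [← horder]; exact addOrderOf_nsmul_eq_zero g
  -- basic numeric facts
  have h2c : 2 * c < p := by
    rw [lt_div_iff₀ (by norm_num : (0:ℝ) < 2)] at hcp
    exact_mod_cast (by push_cast; linarith : ((2 * c : ℕ) : ℝ) < (p : ℝ))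
  have hm0 : 0 < m := by
    rcases Nat.eq_zero_or_pos m with h | h
    · exfalso; rw [h, Nat.gcd_zero_left] at hgcd; omega
    · exact h
  have hkpc : k * p ≤ m * c := by
    rw [div_le_iff₀ (by exact_mod_cast hc0 : (0:ℝ) < (c:ℝ))] at hm1
    exact_mod_cast (by push_cast; linarith : ((k * p : ℕ) : ℝ) ≤ ((m * c : ℕ) : ℝ))
  have hmbkp : m * b < k * p := by
    rw [lt_div_iff₀ (by exact_mod_cast hb0 : (0:ℝ) < (b:ℝ))] at hm2
    exact_mod_cast (by push_cast; linarith : ((m * b : ℕ) : ℝ) < ((k * p : ℕ) : ℝ))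
  have hpndvdm : ¬ p ∣ m := by
    intro hd
    have h1 : p ∣ Nat.gcd m p := Nat.dvd_gcd hd dvd_rfl
    rw [hgcd] at h1
    have := Nat.le_of_dvd one_pos h1
    omega
  have hkpc' : k * p < m * c := by
    rcases lt_or_eq_of_le hkpc with h | h
    · exact h
    · exfalso
      have hdvd : p ∣ m * c := ⟨k, by rw [Nat.mul_comm p k]; omega⟩
      rcases (Nat.Prime.dvd_mul hp).mp hdvd with h' | h'
      · exact hpndvdm h'
      · have := Nat.le_of_dvd hc0 h'; omega
  have key : 2 * m + m * c = m * a + m * b := by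
    have h1 : m * (2 + c) = m * (a + b) := by rw [habc]
    have h2 : m * (2 + c) = 2 * m + m * c := by ring
    have h3 : m * (a + b) = m * a + m * b := by ring
    omega
  have h2m : 2 * m ≤ m * a := by
    have : m * 2 ≤ m * a := Nat.mul_le_mul_left m (by omega)
    omega
  have hmma : m ≤ m * a := by
    have : m * 1 ≤ m * a := Nat.mul_le_mul_left m (by omega)
    omega
  have hmp : m < p := by omega
  have hkm : k < m := by
    have h1 : m * c ≤ m * p := Nat.mul_le_mul_left m (by omega)
    have h2 : k * p < m * p := by omega
    exact lt_of_mul_lt_mul_right h2 (Nat.zero_le p)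
  have hbp : b ≤ p := by omega
  have hap : a ≤ p := by omega
  set n3 := m * c - k * p with hn3
  set n4 := k * p - m * b with hn4
  set n5 := p - m * a with hn5
  have hsub1 : (m - k) * p = m * p - k * p := Nat.sub_mul m k p
  have hsub2 : (m - 1) * p = m * p - 1 * p := Nat.sub_mul m 1 p
  have hple : p ≤ m * p := by
    have : 1 * p ≤ m * p := Nat.mul_le_mul_right p hm0
    omega
  have hkpmp : k * p ≤ m * p := Nat.mul_le_mul_right p hkm.le
  have hmulsub_b : m * (p - b) = m * p - m * b := Nat.mul_sub_left_distrib m p b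
  have hmulsub_a : m * (p - a) = m * p - m * a := Nat.mul_sub_left_distrib m p a
  have hn3pos : 0 < n3 := by omega
  have hn3lt : n3 < p := by omega
  have hn4pos : 0 < n4 := by omega
  have hn4lt : n4 < p := by omega
  have hn5pos : 0 < n5 := by omega
  have hn5lt : n5 < p := by omega
  have hsump : m + (m + (n3 + (n4 + n5))) = p := by omega
  -- coefficients for part 1
  have c1 : coeff g (m • g) = m := coeff_eq horder hm0 hmp rfl
  have c3 : coeff g (m • (c • g)) = n3 := by
    refine coeff_eq horder hn3pos hn3lt ?_
    rw [smul_smul m c g]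
    exact (reduce_smul hpg (m * c) n3 k (by omega)).symm
  have c4 : coeff g (m • ((p - b) • g)) = n4 := by
    refine coeff_eq horder hn4pos hn4lt ?_
    rw [smul_smul m (p - b) g]
    exact (reduce_smul hpg (m * (p - b)) n4 (m - k) (by omega)).symm
  have c5 : coeff g (m • ((p - a) • g)) = n5 := by
    refine coeff_eq horder hn5pos hn5lt ?_
    rw [smul_smul m (p - a) g]
    exact (reduce_smul hpg (m * (p - a)) n5 (m - 1) (by omega)).symm
  have hmapsum : ((S.map fun x => m • x).map (coeff g)).sum = p := by
    rw [hS]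
    simp only [Multiset.insert_eq_cons, Multiset.map_cons, Multiset.map_singleton,
      Multiset.sum_cons, Multiset.sum_singleton]
    rw [c1, c3, c4, c5]
    omega
  have hnorm1 : seqNorm g (S.map fun x => m • x) = 1 := by
    rw [seqNorm, hmapsum, hcard, div_self (by exact_mod_cast hp0.ne')]
  -- part 2 : construct the generator h = m' • g
  haveI : NeZero p := ⟨hp0.ne'⟩
  haveI : Fact p.Prime := ⟨hp⟩
  have hmz : (m : ZMod p) ≠ 0 := fun h0 =>
    hpndvdm ((ZMod.natCast_eq_zero_iff m p).mp h0)
  set u : ZMod p := (m : ZMod p)⁻¹ with hu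
  set m' : ℕ := u.val with hm'def
  have hum : u * (m : ZMod p) = 1 := inv_mul_cancel₀ hmz
  have hm'm : ((m' * m : ℕ) : ZMod p) = ((1 : ℕ) : ZMod p) := by
    push_cast
    rw [hm'def, ZMod.natCast_val, ZMod.cast_id]
    exact hum
  have hmodeq : m' * m ≡ 1 [MOD p] := (ZMod.natCast_eq_natCast_iff _ _ _).mp hm'm
  have hm'0 : m' ≠ 0 := by
    have hune : u ≠ 0 := inv_ne_zero hmz
    simpa [hm'def, ZMod.val_eq_zero] using hune
  have h1le : 1 ≤ m' * m := Nat.one_le_iff_ne_zero.mpr (Nat.mul_ne_zero hm'0 hm0.ne')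
  have hdvd1 : p ∣ m' * m - 1 := (Nat.modEq_iff_dvd' h1le).mp hmodeq.symm
  obtain ⟨s, hs⟩ := hdvd1
  have hps : p * s = s * p := Nat.mul_comm p s
  have hmm' : m * m' = m' * m := Nat.mul_comm m m'
  set h : G := m' • g with hh
  have hmh : m • h = g := by
    rw [hh, smul_smul m m' g]
    have h1 : (m * m') • g = 1 • g := reduce_smul hpg (m * m') 1 s (by omega)
    rw [h1, one_smul]
  have hgen' : AddSubgroup.zmultiples h = ⊤ := by
    rw [eq_top_iff, ← hg]
    refine AddSubgroup.zmultiples_le.mpr ?_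
    exact AddSubgroup.mem_zmultiples_iff.mpr ⟨(m : ℤ), by rw [natCast_zsmul]; exact hmh⟩
  have hordh : addOrderOf h = p := hcard ▸ order_of_gen hgen'
  have hph : p • h = 0 := by rw [← hordh]; exact addOrderOf_nsmul_eq_zero h
  have hcm : c * m = m * c := Nat.mul_comm c m
  have hpbm : (p - b) * m = m * (p - b) := Nat.mul_comm (p - b) m
  have hpam : (p - a) * m = m * (p - a) := Nat.mul_comm (p - a) m
  have d1 : coeff h g = m := coeff_eq hordh hm0 hmp hmh
  have d3 : coeff h (c • g) = n3 := by
    refine coeff_eq hordh hn3pos hn3lt ?_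
    rw [← hmh, smul_smul c m h]
    exact (reduce_smul hph (c * m) n3 k (by omega)).symm
  have d4 : coeff h ((p - b) • g) = n4 := by
    refine coeff_eq hordh hn4pos hn4lt ?_
    rw [← hmh, smul_smul (p - b) m h]
    exact (reduce_smul hph ((p - b) * m) n4 (m - k) (by omega)).symm
  have d5 : coeff h ((p - a) • g) = n5 := by
    refine coeff_eq hordh hn5pos hn5lt ?_
    rw [← hmh, smul_smul (p - a) m h]
    exact (reduce_smul hph ((p - a) * m) n5 (m - 1) (by omega)).symm
  have hmapsum2 : (S.map (coeff h)).sum = p := by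
    rw [hS]
    simp only [Multiset.insert_eq_cons, Multiset.map_cons, Multiset.map_singleton,
      Multiset.sum_cons, Multiset.sum_singleton]
    rw [d1, d3, d4, d5]
    omega
  have hnormh : seqNorm h S = 1 := by
    rw [seqNorm, hmapsum2, hcard, div_self (by exact_mod_cast hp0.ne')]
  have hmem1 : (1 : ℝ) ∈ (fun g => seqNorm g S) '' {g : G | AddSubgroup.zmultiples g = ⊤} :=
    ⟨h, hgen', hnormh⟩
  have hlb : ∀ r ∈ (fun g => seqNorm g S) '' {g : G | AddSubgroup.zmultiples g = ⊤},
      (1 : ℝ) ≤ r := by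
    rintro r ⟨x, hx, rfl⟩
    exact norm_ge_one S hmin.1 hmin.2.1 hx
  have hidx : seqIndex S = 1 := by
    refine le_antisymm ?_ (le_csInf ⟨1, hmem1⟩ hlb)
    exact csInf_le ⟨1, hlb⟩ hmem1
  exact ⟨hnorm1.le, hidx⟩
end
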